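/- arXiv:2403.10577 — 2 statements merged into one kernel-verified Lean document; each statement's English description precedes it below -/
import Mathlib

section
/- For a decorated permutation σ ∈ S̃_n with σ ≠ θ, define DEX(σ) as the descent set of the word σ̄ over the ordered alphabet 1̄ < ··· < n̄ < 0 < 1 < ··· < n obtained from σ by barring σ_i whenever σ_i > i; and DEX(θ) = ∅. Then Σ_{i ∈ DEX(σ)} i = maj(σ) − exc(σ) for every σ ∈ S̃_n. -/
open scoped Classical

/-- A decorated permutation of `[n]`, encoded as its one-line word
`w : Fin n → Fin (n+1)` (position `i` is the 1-based position `i+1`, value `0`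
means no value): the nonzero entries are distinct, and every nonzero value is
(the 1-based name of) a position carrying a nonzero entry.  Hence the nonzero
entries form a permutation of their set of positions. -/
def IsDecorated {n : ℕ} (w : Fin n → Fin (n + 1)) : Prop :=
  (∀ i j, (w i : ℕ) ≠ 0 → w i = w j → i = j) ∧
  (∀ i, (w i : ℕ) ≠ 0 → ∃ j : Fin n, (w j : ℕ) ≠ 0 ∧ (w i : ℕ) = (j : ℕ) + 1)

/-- The all-zero decorated permutation `θ`. -/
def isTheta {n : ℕ} (w : Fin n → Fin (n + 1)) : Prop := ∀ i, (w i : ℕ) = 0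

/-- The number of excedances of a decorated permutation (positions `i` with
`w_i > i`, in 1-based terms). -/
def dExc {n : ℕ} (w : Fin n → Fin (n + 1)) : ℕ :=
  (Finset.univ.filter (fun i : Fin n => (i : ℕ) + 1 < (w i : ℕ))).card

/-- `exc(w) + 1`, where `exc(θ) = -1`. -/
noncomputable def dExcP1 {n : ℕ} (w : Fin n → Fin (n + 1)) : ℕ :=
  if isTheta w then 0 else dExc w + 1

/-- The number of descents of the one-line word of a decorated permutation,
with respect to the order `0 < 1 < ⋯ < n`. -/
def dDes {n : ℕ} (w : Fin n → Fin (n + 1)) : ℕ :=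
  ((Finset.range n).filter (fun i =>
    ∃ h : i + 1 < n, (w ⟨i + 1, h⟩ : ℕ) < (w ⟨i, Nat.lt_of_succ_lt h⟩ : ℕ))).card

/-- The major index of the one-line word of a decorated permutation. -/
def dMaj {n : ℕ} (w : Fin n → Fin (n + 1)) : ℕ :=
  ∑ i ∈ (Finset.range n).filter (fun i =>
      ∃ h : i + 1 < n, (w ⟨i + 1, h⟩ : ℕ) < (w ⟨i, Nat.lt_of_succ_lt h⟩ : ℕ)), (i + 1)

/-- The letter at position `i` of the barred word `σ̄` of a decorated
permutation, over the alphabet `1̄ < ⋯ < n̄ < 0 < 1 < ⋯ < n` encoded in `ℤ`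
(`k̄ ↦ k - (n+1)`, unbarred letters unchanged); position `i` is barred exactly
when it is an excedance (`w_i > i` in 1-based terms). -/
def dBarred {n : ℕ} (w : Fin n → Fin (n + 1)) (i : Fin n) : ℤ :=
  if (i : ℕ) + 1 < (w i : ℕ) then ((w i : ℕ) : ℤ) - (n + 1) else ((w i : ℕ) : ℤ)

/-- `DEX(σ)` for a decorated permutation: the descent set of the barred word,
as 0-based indices (so index `i` records the 1-based position `i+1`).  For the
all-zero word `θ` this set is empty. -/
def dDEXset {n : ℕ} (w : Fin n → Fin (n + 1)) : Finset ℕ :=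
  (Finset.range n).filter (fun i =>
    ∃ h : i + 1 < n, dBarred w ⟨i + 1, h⟩ < dBarred w ⟨i, Nat.lt_of_succ_lt h⟩)

/-- `maj(w)` as an integer, with `maj(θ) = -1`. -/
noncomputable def dMajZ {n : ℕ} (w : Fin n → Fin (n + 1)) : ℤ :=
  if isTheta w then -1 else dMaj w

/-- `exc(w)` as an integer, with `exc(θ) = -1`. -/
noncomputable def dExcZ {n : ℕ} (w : Fin n → Fin (n + 1)) : ℤ :=
  if isTheta w then -1 else dExc w

/-!
Barring the excedance letters changes the descent status of a position `i` only when exactly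
one of `i`, `i + 1` is an excedance, since barred letters lie below all unbarred ones. If only
`i` is, then `w_i ≥ i + 1 ≥ w_{i+1}`, and `w_i ≠ w_{i+1}` by injectivity, so a descent is
destroyed; if only `i + 1` is, then `w_i ≤ i < w_{i+1}` and a descent is created. Writing `χ_i`
for the excedance indicator (with `χ_n = 0`), this says `des_i - dex_i = χ_i - χ_{i+1}`, and
summation by parts turns `Σ (i + 1) (χ_i - χ_{i+1})` into `Σ χ_i = exc`.
-/

def IsDescentAt {α : Type*} [LT α] {n : ℕ} (u : Fin n → α) (i : ℕ) : Prop :=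
  ∃ h : i + 1 < n, u ⟨i + 1, h⟩ < u ⟨i, Nat.lt_of_succ_lt h⟩

instance {α : Type*} [LT α] [DecidableLT α] {n : ℕ} (u : Fin n → α) (i : ℕ) :
    Decidable (IsDescentAt u i) :=
  inferInstanceAs (Decidable (∃ h : i + 1 < n, u ⟨i + 1, h⟩ < u ⟨i, Nat.lt_of_succ_lt h⟩))

def excIndicator {n : ℕ} (w : Fin n → Fin (n + 1)) (i : ℕ) : ℤ :=
  if h : i < n then (if i + 1 < (w ⟨i, h⟩ : ℕ) then 1 else 0) else 0

theorem Finset.sum_range_succ_mul_sub {R : Type*} [CommRing R] (f : ℕ → R) (n : ℕ) :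
    ∑ i ∈ Finset.range n, ((i : R) + 1) * (f i - f (i + 1)) =
      ∑ i ∈ Finset.range n, f i - n * f n := by
  induction n with
  | zero => simp
  | succ n ih => simp only [Finset.sum_range_succ, ih]; push_cast; ring

theorem cast_sum_filter_add_one (s : Finset ℕ) (p : ℕ → Prop) [DecidablePred p] :
    ((∑ i ∈ s.filter p, (i + 1) : ℕ) : ℤ) = ∑ i ∈ s, ((i : ℤ) + 1) * if p i then 1 else 0 := by
  simp [Finset.sum_filter, mul_ite]

/-- `a`, `b` are the letters at the adjacent 1-based positions `k`, `k + 1` of a word in `0, …, N`. -/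
theorem ite_lt_sub_ite_barred_lt {N k a b : ℕ} (ha : a ≤ N) (hb : b ≤ N) (hab : a = b → a = 0) :
    ((if b < a then 1 else 0 : ℤ) -
        if (if k + 1 < b then (b : ℤ) - (N + 1) else b) < (if k < a then (a : ℤ) - (N + 1) else a)
        then 1 else 0) =
      (if k < a then 1 else 0) - if k + 1 < b then 1 else 0 := by
  split_ifs <;> omega

section DecoratedWord

variable {n : ℕ} (w : Fin n → Fin (n + 1))

theorem cast_dMaj :
    (dMaj w : ℤ) = ∑ i ∈ Finset.range n,
      ((i : ℤ) + 1) * if IsDescentAt (fun j => (w j : ℕ)) i then 1 else 0 := by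
  rw [dMaj, cast_sum_filter_add_one]; rfl

theorem cast_sum_dDEXset :
    ((∑ i ∈ dDEXset w, (i + 1) : ℕ) : ℤ) = ∑ i ∈ Finset.range n,
      ((i : ℤ) + 1) * if IsDescentAt (dBarred w) i then 1 else 0 := by
  rw [dDEXset, cast_sum_filter_add_one]; rfl

theorem excIndicator_self : excIndicator w n = 0 := dif_neg (lt_irrefl n)

theorem sum_range_excIndicator : ∑ i ∈ Finset.range n, excIndicator w i = dExc w := by
  rw [← Fin.sum_univ_eq_sum_range, dExc, Finset.card_filter]
  push_cast
  simp [excIndicator]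

theorem ite_isDescentAt_sub_ite_isDescentAt_dBarred
    (hinj : ∀ i j, (w i : ℕ) ≠ 0 → w i = w j → i = j) {i : ℕ} (hi : i < n) :
    ((if IsDescentAt (fun j => (w j : ℕ)) i then 1 else 0 : ℤ) -
        if IsDescentAt (dBarred w) i then 1 else 0) =
      excIndicator w i - excIndicator w (i + 1) := by
  by_cases hlast : i + 1 < n
  · simp only [IsDescentAt, exists_prop_of_true hlast, excIndicator, dif_pos hi, dif_pos hlast,
      dBarred]
    refine ite_lt_sub_ite_barred_lt (Fin.is_le _) (Fin.is_le _) fun heq => ?_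
    by_contra hne
    have := hinj ⟨i, hi⟩ ⟨i + 1, hlast⟩ hne (Fin.ext heq)
    simp at this
  · have hnotExc : ¬ i + 1 < (w ⟨i, hi⟩ : ℕ) := by have := Fin.is_le (w ⟨i, hi⟩); omega
    simp [IsDescentAt, hlast, excIndicator, hi, hnotExc]

theorem dMaj_sub_sum_dDEXset (hinj : ∀ i j, (w i : ℕ) ≠ 0 → w i = w j → i = j) :
    (dMaj w : ℤ) - ((∑ i ∈ dDEXset w, (i + 1) : ℕ) : ℤ) = dExc w := by
  rw [cast_dMaj, cast_sum_dDEXset, ← Finset.sum_sub_distrib]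
  calc _ = ∑ i ∈ Finset.range n, ((i : ℤ) + 1) * (excIndicator w i - excIndicator w (i + 1)) :=
        Finset.sum_congr rfl fun i hi => by
          rw [← mul_sub, ite_isDescentAt_sub_ite_isDescentAt_dBarred w hinj (Finset.mem_range.1 hi)]
    _ = dExc w := by
        rw [Finset.sum_range_succ_mul_sub, excIndicator_self, mul_zero, sub_zero,
          sum_range_excIndicator]

theorem dMaj_eq_zero_of_isTheta (hθ : isTheta w) : dMaj w = 0 := by
  simp [dMaj, hθ _]

theorem dExc_eq_zero_of_isTheta (hθ : isTheta w) : dExc w = 0 := by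
  simp [dExc, hθ _]

end DecoratedWord

/-- For every decorated permutation `σ ∈ S̃_n`,
`Σ_{i ∈ DEX(σ)} i = maj(σ) - exc(σ)`. -/
theorem sum_dDEX_eq_maj_sub_exc (n : ℕ) (w : Fin n → Fin (n + 1))
    (hw : IsDecorated w) :
    ((∑ i ∈ dDEXset w, (i + 1) : ℕ) : ℤ) = dMajZ w - dExcZ w := by
  have key := dMaj_sub_sum_dDEXset w hw.1
  by_cases hθ : isTheta w
  · simp only [dMajZ, dExcZ, if_pos hθ, dMaj_eq_zero_of_isTheta w hθ,
      dExc_eq_zero_of_isTheta w hθ] at key ⊢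
    linarith
  · simp only [dMajZ, dExcZ, if_neg hθ]
    linarith
end

section
/- The map sending a monomial x_{F_1}^{a_1}···x_{F_ℓ}^{a_ℓ} in F̃Y(B_n) to an extended code (α, f) — where if a_1 = 1 then α_i = j−1 for i ∈ F_j\F_{j−1}, α_i = ∞ for i ∉ F_ℓ, and f(j) = a_{j+1}; while if a_1 ≥ 2 then α_i = j for i ∈ F_j\F_{j−1}, α_i = ∞ for i ∉ F_ℓ, f(1) = a_1 − 1, and f(j) = a_j for j ≥ 2 — is a bijection from F̃Y(B_n) to the set of extended codes of length n, under which the degree of the monomial equals ind(α,f) + 1, and which is S_n-equivariant. -/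
open scoped Classical

/-- The maximum finite value appearing in a sequence over `ℕ ∪ {∞}`
(`∞` contributes `0`). -/
def extMax {n : ℕ} (α : Fin n → ℕ∞) : ℕ := Finset.univ.sup fun i => (α i).toNat

/-- `(α, f)` is an extended code of length `n`: `α` is a sequence over
`ℕ ∪ {∞}`, each `k` with `1 ≤ k ≤ m` (`m` the maximum finite value) occurs at
least twice, and `1 ≤ f k ≤ (occurrences of k) - 1`; `f` vanishes outside
`[m]`.  Positions equal to `∞` are unrestricted. -/
def IsExtCode (n : ℕ) (α : Fin n → ℕ∞) (f : ℕ → ℕ) : Prop :=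
  (∀ k, 1 ≤ k → k ≤ extMax α →
      1 ≤ f k ∧ f k + 1 ≤ (Finset.univ.filter (fun i => α i = (k : ℕ∞))).card) ∧
  (∀ k, k = 0 ∨ extMax α < k → f k = 0)

/-- `ind(α,f) + 1`, where the index of an extended code is the sum of its
marks, and the index of the all-`∞` code is `-1`. -/
noncomputable def extIndP1 {n : ℕ} (α : Fin n → ℕ∞) (f : ℕ → ℕ) : ℕ :=
  if ∀ i, α i = ⊤ then 0 else (∑ k ∈ Finset.Icc 1 (extMax α), f k) + 1

/-- An element `x_{F_1}^{a_1} ⋯ x_{F_ℓ}^{a_ℓ}` of the Feichtner–Yuzvinsky basis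
`F̃Y(B_n)` of the augmented Chow ring of the Boolean matroid: a chain
`∅ ⊊ F_1 ⊊ ⋯ ⊊ F_ℓ ⊆ [n]` with `1 ≤ a_1 ≤ |F_1|` and
`1 ≤ a_i ≤ |F_i| - |F_{i-1}| - 1` for `i ≥ 2` (the empty monomial `1` is the
case `ℓ = 0`). -/
structure FYtMonomial (n : ℕ) where
  len : ℕ
  F : Fin len → Finset (Fin n)
  a : Fin len → ℕ
  chain : ∀ i j : Fin len, i < j → F i ⊂ F j
  a_pos : ∀ i : Fin len, 1 ≤ a i
  a_le_first : ∀ i : Fin len, (i : ℕ) = 0 → a i ≤ (F i).card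
  a_le : ∀ i : Fin len, 0 < (i : ℕ) →
    a i + (F ⟨(i : ℕ) - 1, lt_of_le_of_lt (Nat.sub_le _ _) i.isLt⟩).card + 1 ≤ (F i).card

/-- The degree of an `F̃Y`-basis monomial. -/
def FYtdeg {n : ℕ} (m : FYtMonomial n) : ℕ := ∑ i, m.a i

/-- The map `φ̃ : F̃Y(B_n) → extended codes`.  If `a_1 = 1`: `α_i = j - 1` for
`i ∈ F_j \ F_{j-1}` (this is the number of sets of the chain not containing
`i`), `α_i = ∞` for `i ∉ F_ℓ`, and `f j = a_{j+1}`.  If `a_1 ≥ 2`: `α_i = j`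
for `i ∈ F_j \ F_{j-1}`, `α_i = ∞` for `i ∉ F_ℓ`, `f 1 = a_1 - 1` and
`f j = a_j` for `j ≥ 2`. -/
noncomputable def phiT {n : ℕ} (m : FYtMonomial n) : (Fin n → ℕ∞) × (ℕ → ℕ) :=
  if h0 : 0 < m.len then
    if m.a ⟨0, h0⟩ = 1 then
      (fun i => if ∃ j, i ∈ m.F j then
          (((Finset.univ.filter (fun j => i ∉ m.F j)).card : ℕ) : ℕ∞) else ⊤,
       fun k => if hk : 1 ≤ k ∧ k + 1 ≤ m.len then m.a ⟨k, by omega⟩ else 0)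
    else
      (fun i => if ∃ j, i ∈ m.F j then
          (((Finset.univ.filter (fun j => i ∉ m.F j)).card + 1 : ℕ) : ℕ∞) else ⊤,
       fun k => if k = 1 then m.a ⟨0, h0⟩ - 1
         else if hk : 2 ≤ k ∧ k ≤ m.len then m.a ⟨k - 1, by omega⟩ else 0)
  else (fun _ => ⊤, fun _ => 0)

/-- The action of `σ ∈ S_n` on an `F̃Y`-basis monomial. -/
def permFYt {n : ℕ} (σ : Equiv.Perm (Fin n)) (m : FYtMonomial n) : FYtMonomial n where
  len := m.len
  F := fun j => (m.F j).map σ.toEmbedding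
  a := m.a
  chain := fun i j hij => Finset.map_ssubset_map.mpr (m.chain i j hij)
  a_pos := m.a_pos
  a_le_first := fun i hi => by simpa using m.a_le_first i hi
  a_le := fun i hi => by simpa using m.a_le i hi

/-- The action of `σ ∈ S_n` on extended codes, permuting the positions of `α`. -/
def permExtCode {n : ℕ} (σ : Equiv.Perm (Fin n)) (p : (Fin n → ℕ∞) × (ℕ → ℕ)) :
    (Fin n → ℕ∞) × (ℕ → ℕ) :=
  (fun i => p.1 (σ⁻¹ i), p.2)

/-!
Encode the chain by the depth of each `i`: the number of sets `F j` missing `i`, or `∞` if `i`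
lies in none of them. Then `F j = {depth ≤ j}`, so the level `{depth = j}` has
`|F j| - |F (j - 1)|` elements, and `φ̃ = depth + s` with `s = 0` if `a 0 = 1` and `s = 1`
otherwise, with marks `f (s + j) = a j - [j = 0]`. Under this dictionary the bounds on the
exponents are exactly the bounds of an extended code. Conversely `s` is read off from whether the
code contains a `0`, and then `F j = {α ≤ j + s}`, `a j = f (j + s) + [j = 0]` invert `φ̃`.
Both the degree identity `Σ a j = Σ f + 1` and the equivariance are then immediate.
-/

open Finset

theorem Fin.mem_iff_lt_card_of_isLowerSet {N : ℕ} {S : Finset (Fin N)}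
    (hS : IsLowerSet (S : Set (Fin N))) (j : Fin N) : j ∈ S ↔ (j : ℕ) < #S := by
  rcases hS.eq_univ_or_Iio with h | ⟨a, h⟩
  · rw [coe_eq_univ] at h
    simp [h]
  · rw [← coe_Iio, coe_inj] at h
    rw [h, mem_Iio, Fin.card_Iio, Fin.lt_def]

theorem ENat.card_filter_le_add_one {ι : Type*} [Fintype ι] (g : ι → ℕ∞) (k : ℕ) :
    #{i | g i ≤ ((k + 1 : ℕ) : ℕ∞)} =
      #{i | g i ≤ (k : ℕ∞)} + #{i | g i = ((k + 1 : ℕ) : ℕ∞)} := by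
  rw [← card_union_of_disjoint, ← filter_or]
  · congr 1
    ext i
    simp only [mem_filter, mem_univ, true_and]
    induction g i using ENat.recTopCoe with
    | top => simp only [top_le_iff, ENat.top_ne_natCast, ENat.natCast_ne_top, or_self]
    | coe v => simp only [Nat.cast_le, Nat.cast_inj]; omega
  · refine disjoint_filter.mpr fun i _ hle heq => ?_
    rw [heq, Nat.cast_le] at hle
    omega

theorem ENat.eq_of_forall_le_natCast_iff {x y : ℕ∞} {L : ℕ} (hx : x < L ∨ x = ⊤)
    (hy : y < L ∨ y = ⊤) (h : ∀ j < L, x ≤ j ↔ y ≤ j) : x = y := by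
  have hle : ∀ {x y : ℕ∞}, x < L → (∀ j < L, x ≤ j ↔ y ≤ j) → y ≤ x := by
    intro x y hx h
    lift x to ℕ using (hx.trans (ENat.natCast_lt_top L)).ne
    exact (h x (Nat.cast_lt.mp hx)).mp le_rfl
  rcases hx with hx | rfl
  · have hyx := hle hx h
    exact le_antisymm (hle (hyx.trans_lt hx) fun j hj => (h j hj).symm) hyx
  · rcases hy with hy | rfl
    · exact absurd (hy.trans (ENat.natCast_lt_top L))
        (not_lt_of_ge (hle hy fun j hj => (h j hj).symm))
    · rfl

theorem le_extMax {n : ℕ} (α : Fin n → ℕ∞) (i : Fin n) : (α i).toNat ≤ extMax α :=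
  Finset.le_sup (f := fun i => (α i).toNat) (mem_univ i)

theorem extMax_le {n : ℕ} {α : Fin n → ℕ∞} {M : ℕ} (h : ∀ i, (α i).toNat ≤ M) :
    extMax α ≤ M :=
  Finset.sup_le fun i _ => h i

def codeShift {n : ℕ} (α : Fin n → ℕ∞) : ℕ := if ∃ i, α i = 0 then 0 else 1

theorem codeShift_le_one {n : ℕ} (α : Fin n → ℕ∞) : codeShift α ≤ 1 := by
  unfold codeShift
  split_ifs <;> omega

theorem codeShift_le {n : ℕ} (α : Fin n → ℕ∞) (i : Fin n) : (codeShift α : ℕ∞) ≤ α i := by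
  unfold codeShift
  split_ifs with h
  · exact bot_le
  · push Not at h
    exact Order.one_le_iff_ne_zero.mpr (h i)

namespace FYtMonomial

variable {n : ℕ} (m : FYtMonomial n)

theorem F_mono {j k : Fin m.len} (h : j ≤ k) : m.F j ⊆ m.F k :=
  h.eq_or_lt.elim (fun h => h ▸ subset_rfl) fun h => (m.chain j k h).subset

theorem mem_F_iff_card_le (i : Fin n) (j : Fin m.len) :
    i ∈ m.F j ↔ #{j | i ∉ m.F j} ≤ (j : ℕ) := by
  have hlow : IsLowerSet ((({j | i ∉ m.F j} : Finset (Fin m.len))) : Set (Fin m.len)) :=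
    fun a b hba ha => by
      simp only [coe_filter, mem_univ, true_and, Set.mem_ofPred_eq] at ha ⊢
      exact fun hb => ha (m.F_mono hba hb)
  have := Fin.mem_iff_lt_card_of_isLowerSet hlow j
  simp only [mem_filter, mem_univ, true_and] at this
  rw [← not_lt, ← this, not_not]

/-- `j` for `i ∈ F j \ F (j - 1)`, and `∞` for `i` outside every `F j`. -/
noncomputable def depth (i : Fin n) : ℕ∞ :=
  if ∃ j, i ∈ m.F j then (#{j | i ∉ m.F j} : ℕ) else ⊤

theorem depth_le_iff_mem_F (i : Fin n) (j : Fin m.len) : m.depth i ≤ (j : ℕ) ↔ i ∈ m.F j := by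
  rw [depth, mem_F_iff_card_le]
  split_ifs with h
  · exact Nat.cast_le
  · push Not at h
    simp [h]

theorem depth_lt_len_or_eq_top (i : Fin n) : m.depth i < m.len ∨ m.depth i = ⊤ := by
  rw [depth]
  split_ifs with h
  · obtain ⟨j, hj⟩ := h
    exact Or.inl (Nat.cast_lt.mpr (((m.mem_F_iff_card_le i j).mp hj).trans_lt j.isLt))
  · exact Or.inr rfl

theorem depth_eq_of_forall_mem_F_iff {i : Fin n} {d : ℕ∞} (hd : d < m.len ∨ d = ⊤)
    (hF : ∀ j, i ∈ m.F j ↔ d ≤ (j : ℕ)) : m.depth i = d :=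
  ENat.eq_of_forall_le_natCast_iff (m.depth_lt_len_or_eq_top i) hd fun j hj =>
    (m.depth_le_iff_mem_F i ⟨j, hj⟩).trans (hF ⟨j, hj⟩)

theorem F_eq_filter_depth_le (j : Fin m.len) :
    m.F j = ({i | m.depth i ≤ (j : ℕ)} : Finset (Fin n)) := by
  ext i
  simp [depth_le_iff_mem_F]

theorem add_le_card_depth_eq (j : Fin m.len) :
    m.a j + (if (j : ℕ) = 0 then 0 else 1) ≤ #{i | m.depth i = (j : ℕ)} := by
  obtain ⟨_ | j, hj⟩ := j
  · have := m.a_le_first ⟨0, hj⟩ rfl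
    rw [F_eq_filter_depth_le] at this
    simpa using this
  · have := m.a_le ⟨j + 1, hj⟩ j.succ_pos
    rw [F_eq_filter_depth_le, F_eq_filter_depth_le] at this
    simp only [add_tsub_cancel_right] at this
    rw [ENat.card_filter_le_add_one] at this
    simp only [Nat.add_eq_zero_iff, one_ne_zero, and_false, if_false]
    omega

theorem exists_depth_eq {j : ℕ} (hj : j < m.len) : ∃ i, m.depth i = j := by
  have hpos : 0 < #{i | m.depth i = j} :=
    Nat.lt_of_lt_of_le (m.a_pos ⟨j, hj⟩)
      ((Nat.le_add_right _ _).trans (m.add_le_card_depth_eq ⟨j, hj⟩))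
  obtain ⟨i, hi⟩ := card_pos.mp hpos
  exact ⟨i, (mem_filter.mp hi).2⟩

def shift : ℕ := if ∃ h : 0 < m.len, m.a ⟨0, h⟩ = 1 then 0 else 1

theorem shift_le_one : m.shift ≤ 1 := by
  unfold shift
  split_ifs <;> omega

theorem shift_eq_zero_iff : m.shift = 0 ↔ ∃ h : 0 < m.len, m.a ⟨0, h⟩ = 1 := by
  unfold shift
  split_ifs with h <;> simp [h]

theorem shift_eq_one_of_len_eq_zero (h0 : m.len = 0) : m.shift = 1 := by
  simp [shift, h0]

def exponent (j : ℕ) : ℕ := if h : j < m.len then m.a ⟨j, h⟩ else 0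

theorem exponent_of_lt {j : ℕ} (h : j < m.len) : m.exponent j = m.a ⟨j, h⟩ := dif_pos h

theorem exponent_of_le {j : ℕ} (h : m.len ≤ j) : m.exponent j = 0 := dif_neg (by omega)

theorem phiT_fst (i : Fin n) : (phiT m).1 i = m.depth i + m.shift := by
  by_cases h0 : 0 < m.len
  · by_cases h1 : m.a ⟨0, h0⟩ = 1
    · simp [phiT, shift, depth, h0, h1]
    · simp only [phiT, shift, depth, h0, h1, dif_pos, if_false, exists_prop, and_false]
      split_ifs <;> simp
  · have hF : ∀ j : Fin m.len, i ∉ m.F j := fun j => absurd j.pos h0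
    simp [phiT, shift, depth, h0, hF]

theorem phiT_snd_zero : (phiT m).2 0 = 0 := by
  unfold phiT
  split_ifs <;> simp_all

theorem phiT_snd_shift_add (j : ℕ) :
    (phiT m).2 (m.shift + j) = m.exponent j - if j = 0 then 1 else 0 := by
  by_cases h0 : 0 < m.len
  · by_cases h1 : m.a ⟨0, h0⟩ = 1
    · rcases j with _ | j
      · simp [phiT, shift, exponent, h0, h1]
      · simp [phiT, shift, exponent, h0, h1]
    · rcases j with _ | j
      · simp [phiT, shift, exponent, h0, h1]
      · simp only [phiT, shift, exponent, h0, h1, dif_pos, if_false, exists_prop, and_false]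
        split_ifs <;> first | omega | simp_all
  · simp [phiT, shift, exponent, h0, show ¬ j < m.len by omega]

theorem phiT_fst_eq_shift_add_iff (i : Fin n) (j : ℕ) :
    (phiT m).1 i = ((m.shift + j : ℕ) : ℕ∞) ↔ m.depth i = j := by
  rw [phiT_fst, Nat.cast_add, add_comm (m.shift : ℕ∞),
    (ENat.add_left_injective_of_ne_top (ENat.natCast_ne_top _)).eq_iff]

theorem phiT_fst_le_shift_add_iff (i : Fin n) (j : ℕ) :
    (phiT m).1 i ≤ ((m.shift + j : ℕ) : ℕ∞) ↔ m.depth i ≤ j := by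
  rw [phiT_fst, Nat.cast_add, add_comm (m.shift : ℕ∞),
    ENat.add_le_add_iff_right (ENat.natCast_ne_top _)]

theorem extMax_phiT : extMax (phiT m).1 = m.len + m.shift - 1 := by
  refine le_antisymm (extMax_le fun i => ?_) ?_
  · rw [phiT_fst]
    rcases m.depth_lt_len_or_eq_top i with h | h
    · lift m.depth i to ℕ using (h.trans (ENat.natCast_lt_top _)).ne with d
      rw [← Nat.cast_add, ENat.toNat_natCast]
      have := Nat.cast_lt.mp h
      omega
    · simp [h]
  · rcases Nat.eq_zero_or_pos m.len with h0 | h0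
    · have := m.shift_le_one
      omega
    · obtain ⟨i, hi⟩ := m.exists_depth_eq (Nat.sub_lt h0 one_pos)
      have := le_extMax (phiT m).1 i
      rw [phiT_fst, hi, ← Nat.cast_add, ENat.toNat_natCast] at this
      omega

theorem forall_phiT_fst_eq_top_iff : (∀ i, (phiT m).1 i = ⊤) ↔ m.len = 0 := by
  simp only [phiT_fst, ENat.add_eq_top, ENat.natCast_ne_top, or_false]
  constructor
  · intro h
    by_contra h0
    obtain ⟨i, hi⟩ := m.exists_depth_eq (Nat.pos_of_ne_zero h0)
    simp [h i] at hi
  · intro h0 i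
    simpa [h0] using m.depth_lt_len_or_eq_top i

theorem codeShift_phiT : codeShift (phiT m).1 = m.shift := by
  unfold codeShift
  split_ifs with h
  · obtain ⟨i, hi⟩ := h
    rw [phiT_fst, add_eq_zero, Nat.cast_eq_zero] at hi
    exact hi.2.symm
  · by_contra hs
    have hs0 : m.shift = 0 := by
      have := m.shift_le_one
      omega
    obtain ⟨i, hi⟩ := m.exists_depth_eq (m.shift_eq_zero_iff.mp hs0).1
    exact h ⟨i, by simp [phiT_fst, hi, hs0]⟩

theorem phiT_snd_eq_zero_of_le {k : ℕ} (hk : m.len + m.shift ≤ k) : (phiT m).2 k = 0 := by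
  obtain ⟨j, rfl⟩ : ∃ j, k = m.shift + j := ⟨k - m.shift, by omega⟩
  rw [phiT_snd_shift_add, m.exponent_of_le (by omega), zero_tsub]

theorem isExtCode_phiT : IsExtCode n (phiT m).1 (phiT m).2 := by
  have hs := m.shift_le_one
  refine ⟨fun k hk1 hkM => ?_, fun k hk => ?_⟩
  · rw [extMax_phiT] at hkM
    obtain ⟨j, rfl⟩ : ∃ j, k = m.shift + j := ⟨k - m.shift, by omega⟩
    have hj : j < m.len := by omega
    simp only [phiT_fst_eq_shift_add_iff, phiT_snd_shift_add, m.exponent_of_lt hj]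
    have hcard : m.a ⟨j, hj⟩ + (if j = 0 then 0 else 1) ≤ #{i | m.depth i = j} :=
      m.add_le_card_depth_eq ⟨j, hj⟩
    have ha := m.a_pos ⟨j, hj⟩
    refine ⟨?_, by split_ifs at hcard ⊢ <;> omega⟩
    split_ifs with hj0
    · subst hj0
      -- `k = shift + 0 ≥ 1` forces `shift = 1`, i.e. `a 0 ≠ 1`
      have ha1 : m.a ⟨0, hj⟩ ≠ 1 := fun h => by
        have := m.shift_eq_zero_iff.mpr ⟨hj, h⟩
        omega
      omega
    · omega
  · rcases hk with rfl | hk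
    · exact m.phiT_snd_zero
    · rw [extMax_phiT] at hk
      exact m.phiT_snd_eq_zero_of_le (by omega)

theorem sum_phiT_snd (h0 : 0 < m.len) :
    ∑ k ∈ Icc 1 (m.len + m.shift - 1), (phiT m).2 k =
      ∑ j ∈ range m.len, (m.exponent j - if j = 0 then 1 else 0) := by
  have hs := m.shift_le_one
  calc ∑ k ∈ Icc 1 (m.len + m.shift - 1), (phiT m).2 k
      = ∑ k ∈ range (m.shift + m.len), (phiT m).2 k := by
        rw [show m.shift + m.len = m.len + m.shift - 1 + 1 by omega, Nat.range_succ_eq_Icc_zero,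
          ← insert_Icc_add_one_left_eq_Icc (Nat.zero_le _), zero_add, sum_insert (by simp),
          phiT_snd_zero, zero_add]
    _ = ∑ j ∈ range m.len, (phiT m).2 (m.shift + j) := by
        rw [sum_range_add, sum_eq_zero fun k hk => ?_, zero_add]
        rw [show k = 0 by simp at hk; omega, phiT_snd_zero]
    _ = _ := sum_congr rfl fun j _ => m.phiT_snd_shift_add j

theorem FYtdeg_eq_extIndP1 : FYtdeg m = extIndP1 (phiT m).1 (phiT m).2 := by
  have hdeg : FYtdeg m = ∑ j ∈ range m.len, m.exponent j := by
    rw [FYtdeg, ← Fin.sum_univ_eq_sum_range]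
    exact sum_congr rfl fun j _ => (m.exponent_of_lt j.isLt).symm
  rw [extIndP1, extMax_phiT, hdeg]
  split_ifs with htop
  · rw [m.forall_phiT_fst_eq_top_iff.mp htop, sum_range_zero]
  · obtain ⟨L, hL⟩ : ∃ L, m.len = L + 1 :=
      Nat.exists_eq_add_one.mpr (Nat.pos_of_ne_zero (mt m.forall_phiT_fst_eq_top_iff.mpr htop))
    have ha0 : 1 ≤ m.exponent 0 := by
      rw [m.exponent_of_lt (by omega)]
      exact m.a_pos _
    rw [sum_phiT_snd _ (by omega), hL, sum_range_succ', sum_range_succ']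
    simp only [Nat.add_eq_zero_iff, one_ne_zero, and_false, if_false, if_true, tsub_zero]
    omega

theorem phiT_snd_congr {m m' : FYtMonomial n} (hs : m.shift = m'.shift)
    (he : m.exponent = m'.exponent) : (phiT m).2 = (phiT m').2 := by
  funext k
  obtain rfl | ⟨j, rfl⟩ : k = 0 ∨ ∃ j, k = m.shift + j := by
    have := m.shift_le_one
    exact (Nat.eq_zero_or_pos k).imp_right fun hk => ⟨k - m.shift, by omega⟩
  · rw [phiT_snd_zero, phiT_snd_zero]
  · rw [phiT_snd_shift_add, hs, phiT_snd_shift_add, he]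

theorem depth_permFYt (σ : Equiv.Perm (Fin n)) (i : Fin n) :
    (permFYt σ m).depth i = m.depth (σ⁻¹ i) :=
  (permFYt σ m).depth_eq_of_forall_mem_F_iff (m.depth_lt_len_or_eq_top _) fun j =>
    mem_map_equiv.trans (m.depth_le_iff_mem_F _ j).symm

theorem phiT_permFYt (σ : Equiv.Perm (Fin n)) :
    phiT (permFYt σ m) = permExtCode σ (phiT m) :=
  Prod.ext (funext fun i => by rw [phiT_fst, depth_permFYt, permExtCode, phiT_fst]; rfl)
    (phiT_snd_congr rfl rfl)

theorem ext_of_len_eq {m m' : FYtMonomial n} (hlen : m.len = m'.len)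
    (hF : ∀ j, m.F j = m'.F (Fin.cast hlen j)) (ha : ∀ j, m.a j = m'.a (Fin.cast hlen j)) :
    m = m' := by
  cases m
  cases m'
  dsimp only at hlen hF ha
  subst hlen
  simp only [Fin.cast_eq_self] at hF ha
  obtain rfl := funext hF
  obtain rfl := funext ha
  rfl

end FYtMonomial

namespace IsExtCode

variable {n : ℕ} {α : Fin n → ℕ∞} {f : ℕ → ℕ}

theorem exists_eq (h : IsExtCode n α f) {k : ℕ} (hk1 : 1 ≤ k) (hk : k ≤ extMax α) :
    ∃ i, α i = k := by
  have := h.1 k hk1 hk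
  obtain ⟨i, hi⟩ := card_pos.mp (by omega : 0 < #{i | α i = k})
  exact ⟨i, (mem_filter.mp hi).2⟩

/-- The inverse of `phiT`: a code containing a `0` comes from `a 0 = 1`, one without from
`a 0 = f 1 + 1`. -/
def toFYtMonomial (h : IsExtCode n α f) : FYtMonomial n where
  len := extMax α + 1 - codeShift α
  F j := {i | α i ≤ ((j + codeShift α : ℕ) : ℕ∞)}
  a j := f (j + codeShift α) + if (j : ℕ) = 0 then 1 else 0
  chain j j' hjj := by
    have hs := codeShift_le_one α
    have hj' := j'.isLt
    rw [Fin.lt_def] at hjj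
    rw [ssubset_iff_of_subset (monotone_filter_right _ fun i _ hi => hi.trans (by gcongr))]
    obtain ⟨i, hi⟩ := h.exists_eq (k := j' + codeShift α) (by omega) (by omega)
    refine ⟨i, by simp [hi], ?_⟩
    simp only [mem_filter, mem_univ, true_and, hi, Nat.cast_le]
    omega
  a_pos j := by
    have hs := codeShift_le_one α
    have hj := j.isLt
    split_ifs with hj0
    · omega
    · exact (h.1 _ (by omega) (by omega)).1
  a_le_first j hj := by
    rw [if_pos hj, hj, zero_add]
    by_cases hz : ∃ i, α i = 0
    · obtain ⟨i, hi⟩ := hz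
      have hs : codeShift α = 0 := if_pos ⟨i, hi⟩
      rw [hs, h.2 0 (Or.inl rfl), zero_add, Nat.one_le_iff_ne_zero, ← pos_iff_ne_zero, card_pos]
      exact ⟨i, by simp [hi]⟩
    · have hs : codeShift α = 1 := if_neg hz
      have hM : 1 ≤ extMax α := by
        have := j.isLt
        omega
      rw [hs]
      exact (h.1 1 le_rfl hM).2.trans (card_le_card (monotone_filter_right _ fun i _ hi => hi.le))
  a_le j hj := by
    have hs := codeShift_le_one α
    have hj' := j.isLt
    rw [if_neg (by omega), add_zero]
    have hsplit := ENat.card_filter_le_add_one α (j - 1 + codeShift α)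
    rw [show j - 1 + codeShift α + 1 = j + codeShift α by omega] at hsplit
    have := (h.1 (j + codeShift α) (by omega) (by omega)).2
    simp only at hsplit ⊢
    omega

@[simp]
theorem toFYtMonomial_len (h : IsExtCode n α f) :
    h.toFYtMonomial.len = extMax α + 1 - codeShift α := rfl

@[simp]
theorem toFYtMonomial_F (h : IsExtCode n α f) (j : Fin h.toFYtMonomial.len) :
    h.toFYtMonomial.F j = ({i | α i ≤ ((j + codeShift α : ℕ) : ℕ∞)} : Finset (Fin n)) := rfl

@[simp]
theorem toFYtMonomial_a (h : IsExtCode n α f) (j : Fin h.toFYtMonomial.len) :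
    h.toFYtMonomial.a j = f (j + codeShift α) + if (j : ℕ) = 0 then 1 else 0 := rfl

theorem shift_toFYtMonomial (h : IsExtCode n α f) : h.toFYtMonomial.shift = codeShift α := by
  have hs := h.toFYtMonomial.shift_le_one
  by_cases hz : ∃ i, α i = 0
  · have h0 : codeShift α = 0 := if_pos hz
    rw [h0, FYtMonomial.shift_eq_zero_iff]
    refine ⟨by simp [h0], ?_⟩
    rw [toFYtMonomial_a]
    simp [h0, h.2 0 (Or.inl rfl)]
  · have h1 : codeShift α = 1 := if_neg hz
    rw [h1]
    by_contra hne
    obtain ⟨hlen, ha⟩ := h.toFYtMonomial.shift_eq_zero_iff.mp (by omega)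
    rw [toFYtMonomial_a] at ha
    simp only [toFYtMonomial_len, h1] at hlen
    have := (h.1 1 le_rfl (by omega)).1
    simp [h1] at ha
    omega

theorem depth_toFYtMonomial (h : IsExtCode n α f) (i : Fin n) :
    h.toFYtMonomial.depth i = α i - codeShift α := by
  refine h.toFYtMonomial.depth_eq_of_forall_mem_F_iff ?_ fun j => ?_
  · rcases eq_or_ne (α i) ⊤ with hi | hi
    · simp [hi]
    · left
      obtain ⟨v, hv⟩ := ENat.ne_top_iff_exists.mp hi
      have hle := le_extMax α i
      have hsv := codeShift_le α i
      rw [← hv] at hle hsv ⊢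
      rw [ENat.toNat_natCast] at hle
      rw [Nat.cast_le] at hsv
      rw [← ENat.natCast_sub, toFYtMonomial_len, Nat.cast_lt]
      omega
  · rw [toFYtMonomial_F, mem_filter, tsub_le_iff_right, Nat.cast_add]
    simp

theorem phiT_toFYtMonomial (h : IsExtCode n α f) : phiT h.toFYtMonomial = (α, f) := by
  have hs := codeShift_le_one α
  refine Prod.ext (funext fun i => ?_) (funext fun k => ?_)
  · rw [FYtMonomial.phiT_fst, depth_toFYtMonomial, shift_toFYtMonomial,
      tsub_add_cancel_of_le (codeShift_le α i)]
  · obtain rfl | ⟨j, rfl⟩ : k = 0 ∨ ∃ j, k = codeShift α + j :=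
      (Nat.eq_zero_or_pos k).imp_right fun hk => ⟨k - codeShift α, by omega⟩
    · exact (FYtMonomial.phiT_snd_zero _).trans (h.2 0 (Or.inl rfl)).symm
    · rw [← h.shift_toFYtMonomial, FYtMonomial.phiT_snd_shift_add, h.shift_toFYtMonomial]
      by_cases hj : j < h.toFYtMonomial.len
      · rw [FYtMonomial.exponent_of_lt _ hj, toFYtMonomial_a, add_comm j]
        simp
      · rw [toFYtMonomial_len] at hj
        rw [FYtMonomial.exponent_of_le _ (by simp; omega), zero_tsub]
        exact (h.2 (codeShift α + j) (Or.inr (by omega))).symm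

end IsExtCode

namespace FYtMonomial

variable {n : ℕ} (m : FYtMonomial n)

theorem toFYtMonomial_isExtCode_phiT : m.isExtCode_phiT.toFYtMonomial = m := by
  have hlen : m.isExtCode_phiT.toFYtMonomial.len = m.len := by
    rw [IsExtCode.toFYtMonomial_len, extMax_phiT, codeShift_phiT]
    have := m.shift_le_one
    rcases Nat.eq_zero_or_pos m.len with h0 | h0
    · rw [m.shift_eq_one_of_len_eq_zero h0, h0]
    · omega
  refine ext_of_len_eq hlen (fun j => ?_) (fun j => ?_)
  · rw [IsExtCode.toFYtMonomial_F, codeShift_phiT, F_eq_filter_depth_le]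
    simp_rw [add_comm _ m.shift, phiT_fst_le_shift_add_iff]
    rfl
  · have ha := m.a_pos (Fin.cast hlen j)
    rw [IsExtCode.toFYtMonomial_a, codeShift_phiT, Nat.add_comm (j : ℕ), phiT_snd_shift_add,
      m.exponent_of_lt (j := j) (Fin.cast hlen j).isLt]
    exact Nat.sub_add_cancel (by split_ifs; exacts [ha, Nat.zero_le _])

theorem phiT_injective : Function.Injective (phiT (n := n)) := fun m₁ m₂ h => by
  rw [← m₁.toFYtMonomial_isExtCode_phiT, ← m₂.toFYtMonomial_isExtCode_phiT]
  simp_rw [h]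

end FYtMonomial

/-- `φ̃` is a bijection from `F̃Y(B_n)` onto the set of extended codes of
length `n`, the degree of a monomial equals `ind(α,f) + 1`, and `φ̃` is
`S_n`-equivariant. -/
theorem phiT_bijection (n : ℕ) :
    Set.BijOn (phiT (n := n)) Set.univ
      {p : (Fin n → ℕ∞) × (ℕ → ℕ) | IsExtCode n p.1 p.2} ∧
    (∀ m : FYtMonomial n, FYtdeg m = extIndP1 (phiT m).1 (phiT m).2) ∧
    (∀ (σ : Equiv.Perm (Fin n)) (m : FYtMonomial n),
      phiT (permFYt σ m) = permExtCode σ (phiT m)) :=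
  ⟨⟨fun m _ => m.isExtCode_phiT, FYtMonomial.phiT_injective.injOn,
      fun _ hp => ⟨hp.toFYtMonomial, Set.mem_univ _, hp.phiT_toFYtMonomial⟩⟩,
    FYtMonomial.FYtdeg_eq_extIndP1, fun σ m => m.phiT_permFYt σ⟩
end
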